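/- Let V be a real vector space, θ, η ∈ V*, ω an antisymmetric bilinear form on V, and set H = ker θ ∩ ker η. If ω restricted to H is weakly non-degenerate, then the map ♭(v) = θ(v)·θ + ω(v,·) + η(v)·η from V to V* is injective. -/
import Mathlib


theorem cocontact_flat_injective_of_restriction_nondeg
    {V : Type*} [AddCommGroup V] [Module ℝ V]
    (θ η : V →ₗ[ℝ] ℝ) (ω : V →ₗ[ℝ] V →ₗ[ℝ] ℝ)
    (hanti : ∀ v w, ω v w = -ω w v)
    (hnondeg : ∀ h ∈ LinearMap.ker θ ⊓ LinearMap.ker η,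
      (∀ h' ∈ LinearMap.ker θ ⊓ LinearMap.ker η, ω h h' = 0) → h = 0) :
    Function.Injective
      (fun v : V => (θ v • θ + ω v + η v • η : Module.Dual ℝ V)) := by
  intro a b hab
  simp only at hab
  set v := a - b with hv
  have hflat : ∀ w, θ v * θ w + ω v w + η v * η w = 0 := by
    intro w
    have h := congrArg (fun f : Module.Dual ℝ V => f w) hab
    simp only [LinearMap.add_apply, LinearMap.smul_apply, smul_eq_mul] at h
    simp only [hv, map_sub, LinearMap.sub_apply]
    ring_nf
    ring_nf at h
    linarith
  have hself := hflat v
  have hωvv : ω v v = 0 := by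
    have := hanti v v; linarith
  have hθv : θ v = 0 ∧ η v = 0 := by
    constructor <;> nlinarith [sq_nonneg (θ v), sq_nonneg (η v)]
  have hvH : v ∈ LinearMap.ker θ ⊓ LinearMap.ker η := by
    simp [LinearMap.mem_ker, hθv.1, hθv.2]
  have hv0 : v = 0 := by
    apply hnondeg v hvH
    intro h' hh'
    have := hflat h'
    rw [hθv.1, hθv.2] at this
    linarith
  exact sub_eq_zero.mp hv0
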